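/- arXiv:0809.4673 — 5 statements merged into one kernel-verified Lean document; each statement's English description precedes it below -/
import Mathlib

section
/- Let K be a field of characteristic zero containing all roots of unity. Any element of PGL(2,K) of finite order is either diagonalisable (conjugate to a diagonal matrix class) or is an involution conjugate to the class of the matrix [[0,g],[1,0]] for some g in K*. -/
/-!
Lift `g` to `A ∈ GL₂(K)`; then `A ^ n = r • 1` for some `n > 0`. A scalar `A` is already
diagonal. Otherwise `A` has a cyclic vector, so it is conjugate to the companion matrix
`[[0, -δ], [1, τ]]` of its characteristic polynomial `X² - τX + δ`. If `τ = 0` its square is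
scalar and `g` is an involution of the required shape. If `τ ≠ 0`, the matrix `u = A² / δ`
satisfies `u ^ n = 1`, so it has an eigenvalue among the `n`-th roots of unity, which all lie in
`K`; as `u = (τ / δ) • A - 1`, the matrix `A` has an eigenvalue `ρ ∈ K` as well. Were `ρ` a double
eigenvalue, `u = (1 + M)²` with `M² = 0` and `1 = u ^ n = 1 + 2n • M` would force `M = 0` in
characteristic zero, making `A` scalar. So the eigenvalues are distinct and `A` is diagonalisable.
-/

open Matrix

abbrev PGL2 (K : Type*) [Field K] :=
  GL (Fin 2) K ⧸ Subgroup.center (GL (Fin 2) K)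

theorem one_add_pow_of_mul_self_eq_zero {R : Type*} [Semiring R] {M : R} (hM : M * M = 0)
    (n : ℕ) : (1 + M) ^ n = 1 + n • M := by
  induction n with
  | zero => simp
  | succ k ih =>
    rw [pow_succ, ih, add_mul, one_mul, mul_add, mul_one, smul_mul_assoc, hM, smul_zero,
      add_zero, succ_nsmul]
    abel

namespace Matrix

variable {K : Type*} [Field K]

open Polynomial in
theorem exists_det_sub_smul_one_eq_zero_of_pow_eq_one {ι : Type*} [Fintype ι] [DecidableEq ι]
    [Nonempty ι] {M : Matrix ι ι K} {n : ℕ} (hn : 0 < n) (hM : M ^ n = 1) {ζ : K}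
    (hζ : IsPrimitiveRoot ζ n) : ∃ z : K, (M - z • 1).det = 0 := by
  have hprod : ∏ z ∈ nthRootsFinset n (1 : K), (M - z • 1).det = 0 := by
    have key := map_prod (detMonoidHom.comp (aeval (R := K) M).toMonoidHom)
      (fun z => X - C z) (nthRootsFinset n (1 : K))
    simp only [MonoidHom.comp_apply, coe_detMonoidHom] at key
    rw [← X_pow_sub_one_eq_prod hn hζ] at key
    simpa [hM, Algebra.algebraMap_eq_smul_one] using key.symm
  obtain ⟨z, -, hz⟩ := Finset.prod_eq_zero_iff.1 hprod
  exact ⟨z, hz⟩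

open Polynomial in
theorem sq_eq_trace_smul_sub_det_smul (N : Matrix (Fin 2) (Fin 2) K) :
    N ^ 2 = N.trace • N - N.det • 1 := by
  have hcayley := N.aeval_self_charpoly
  rw [charpoly_fin_two] at hcayley
  simp only [map_add, aeval_sub, map_pow, aeval_X, map_mul, aeval_C,
    Algebra.algebraMap_eq_smul_one, smul_mul_assoc, one_mul] at hcayley
  rw [← sub_eq_zero, ← hcayley]
  abel

theorem det_sub_smul_one_fin_two (N : Matrix (Fin 2) (Fin 2) K) (r : K) :
    (N - r • 1).det = r ^ 2 - N.trace * r + N.det := by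
  simp only [det_fin_two, trace_fin_two, sub_apply, smul_apply, one_apply_eq, one_apply_ne,
    smul_eq_mul, mul_one, mul_zero, sub_zero, ne_eq, zero_ne_one, one_ne_zero, not_false_eq_true]
  ring

theorem isConj_of_det_ne_zero_of_mul_eq {ι : Type*} [Fintype ι] [DecidableEq ι]
    {A B C : Matrix ι ι K} (hC : C.det ≠ 0) (h : C * A = B * C) : IsConj A B :=
  ⟨GeneralLinearGroup.mkOfDetNeZero C hC, h⟩

variable {N : Matrix (Fin 2) (Fin 2) K}

theorem isConj_companion_of_det_ne_zero (v : Fin 2 → K)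
    (hv : !![v 0, (N *ᵥ v) 0; v 1, (N *ᵥ v) 1].det ≠ 0) :
    IsConj !![0, -N.det; 1, N.trace] N := by
  refine isConj_of_det_ne_zero_of_mul_eq hv ?_
  ext i j
  fin_cases i <;> fin_cases j <;>
    simp [mul_apply, mulVec, dotProduct, Fin.sum_univ_two, det_fin_two, trace_fin_two] <;> ring

theorem exists_cyclic_vector_fin_two (hscalar : ∀ a : K, N ≠ a • 1) :
    ∃ v : Fin 2 → K, !![v 0, (N *ᵥ v) 0; v 1, (N *ᵥ v) 1].det ≠ 0 := by
  by_cases h10 : N 1 0 = 0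
  · by_cases h01 : N 0 1 = 0
    · refine ⟨![1, 1], ?_⟩
      have h : N 0 0 ≠ N 1 1 := fun h => hscalar (N 0 0) <| by
        ext i j; fin_cases i <;> fin_cases j <;> simp [h10, h01, h]
      simp only [det_fin_two, mulVec, dotProduct, Fin.sum_univ_two, h10, h01, of_apply, cons_val',
        cons_val_zero, cons_val_one, cons_val_fin_one, mul_one, one_mul, add_zero, zero_add, ne_eq]
      exact fun h' => h (by linear_combination -h')
    · exact ⟨![0, 1], by simpa [det_fin_two, mulVec, dotProduct, Fin.sum_univ_two] using h01⟩
  · exact ⟨![1, 0], by simpa [det_fin_two, mulVec, dotProduct, Fin.sum_univ_two] using h10⟩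

theorem isConj_companion_fin_two (hscalar : ∀ a : K, N ≠ a • 1) :
    IsConj !![0, -N.det; 1, N.trace] N :=
  let ⟨v, hv⟩ := exists_cyclic_vector_fin_two hscalar
  isConj_companion_of_det_ne_zero v hv

theorem isConj_diagonal_companion_fin_two {r s : K} (hne : r ≠ s) :
    IsConj !![r, 0; 0, s] !![0, -(r * s); 1, r + s] := by
  refine isConj_of_det_ne_zero_of_mul_eq (C := !![-s, -r; 1, 1]) ?_ ?_
  · simpa [det_fin_two, neg_add_eq_sub, sub_eq_zero] using hne
  · ext i j
    fin_cases i <;> fin_cases j <;> simp [mul_apply, Fin.sum_univ_two]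
    ring

theorem pow_det_inv_smul_sq_eq_one (hδ : N.det ≠ 0) {n : ℕ} {r : K} (hpow : N ^ n = r • 1) :
    (N.det⁻¹ • N ^ 2) ^ n = 1 := by
  have hdet : N.det ^ n = r ^ 2 := by
    simpa [det_pow, det_smul] using congrArg det hpow
  rw [smul_pow, ← pow_mul, mul_comm, pow_mul, hpow, smul_pow, one_pow, smul_smul, inv_pow, hdet,
    inv_mul_cancel₀ (by simpa [← hdet] using pow_ne_zero n hδ), one_smul]

theorem exists_det_sub_smul_one_eq_zero_of_pow_eq_smul_one (hδ : N.det ≠ 0)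
    (hτ : N.trace ≠ 0) {n : ℕ} (hn : 0 < n) {r : K} (hpow : N ^ n = r • 1) {ζ : K}
    (hζ : IsPrimitiveRoot ζ n) : ∃ ρ : K, (N - ρ • 1).det = 0 := by
  obtain ⟨z, hz⟩ :=
    exists_det_sub_smul_one_eq_zero_of_pow_eq_one hn (pow_det_inv_smul_sq_eq_one hδ hpow) hζ
  -- Cayley–Hamilton gives `N² / det N = (trace N / det N) • N - 1`, so the eigenvalue `z` of the
  -- left side yields the eigenvalue `det N * (1 + z) / trace N` of `N`.
  refine ⟨N.det * (1 + z) / N.trace, ?_⟩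
  have hfactor : N.det⁻¹ • N ^ 2 - z • 1 =
      (N.trace / N.det) • (N - (N.det * (1 + z) / N.trace) • 1) := by
    have hcoeff : N.trace / N.det * (N.det * (1 + z) / N.trace) = 1 + z := by field_simp
    rw [sq_eq_trace_smul_sub_det_smul, smul_sub, smul_sub, smul_smul, smul_smul, smul_smul, hcoeff,
      inv_mul_cancel₀ hδ]
    module
  rw [hfactor, det_smul] at hz
  simpa [hτ, hδ] using hz

theorem eq_smul_one_of_trace_eq_two_mul [CharZero K] (hδ : N.det ≠ 0) {n : ℕ} (hn : n ≠ 0)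
    {r : K} (hpow : N ^ n = r • 1) {ρ : K} (hρ : (N - ρ • 1).det = 0) (hτ : N.trace = 2 * ρ) :
    N = ρ • 1 := by
  have hdet : N.det = ρ ^ 2 := by
    rw [det_sub_smul_one_fin_two, hτ] at hρ
    linear_combination hρ
  have hρ0 : ρ ≠ 0 := by rintro rfl; simp_all
  set M := ρ⁻¹ • N - 1 with hM
  have hsq : N ^ 2 = (2 * ρ) • N - ρ ^ 2 • 1 := by rw [sq_eq_trace_smul_sub_det_smul, hτ, hdet]
  have hMM : M * M = 0 := by
    calc M * M = (ρ⁻¹ ^ 2) • N ^ 2 - (2 * ρ⁻¹) • N + 1 := by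
          simp only [hM, sub_mul, mul_sub, smul_mul_smul_comm, one_mul, mul_one, sq]
          module
      _ = 0 := by
          rw [hsq, smul_sub, smul_smul, smul_smul]
          field_simp
          module
  have hu : N.det⁻¹ • N ^ 2 = (1 + M) ^ 2 := by
    rw [hM, add_sub_cancel, smul_pow, hdet, inv_pow]
  have h := pow_det_inv_smul_sq_eq_one hδ hpow
  rw [hu, ← pow_mul, one_add_pow_of_mul_self_eq_zero hMM, add_eq_left,
    ← Nat.cast_smul_eq_nsmul K, smul_eq_zero] at h
  have hM0 : M = 0 := h.resolve_left (by simpa using hn)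
  rw [hM, sub_eq_zero] at hM0
  calc N = ρ • ρ⁻¹ • N := by rw [smul_smul, mul_inv_cancel₀ hρ0, one_smul]
    _ = ρ • 1 := by rw [hM0]

theorem exists_isConj_diagonal_fin_two [CharZero K] (hscalar : ∀ a : K, N ≠ a • 1)
    (hδ : N.det ≠ 0) (hτ : N.trace ≠ 0) {n : ℕ} (hn : 0 < n) {r : K} (hpow : N ^ n = r • 1)
    {ζ : K} (hζ : IsPrimitiveRoot ζ n) : ∃ a b : K, IsConj !![a, 0; 0, b] N := by
  obtain ⟨ρ, hρ⟩ := exists_det_sub_smul_one_eq_zero_of_pow_eq_smul_one hδ hτ hn hpow hζ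
  have hne : ρ ≠ N.trace - ρ := fun h =>
    hscalar ρ (eq_smul_one_of_trace_eq_two_mul hδ hn.ne' hpow hρ (by linear_combination -h))
  have hcomp :
      !![0, -(ρ * (N.trace - ρ)); 1, ρ + (N.trace - ρ)] = !![0, -N.det; 1, N.trace] := by
    rw [det_sub_smul_one_fin_two] at hρ
    ext i j
    fin_cases i <;> fin_cases j <;> simp
    linear_combination -hρ
  exact ⟨ρ, N.trace - ρ,
    (hcomp ▸ isConj_diagonal_companion_fin_two hne).trans (isConj_companion_fin_two hscalar)⟩

end Matrix

namespace PGL2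

variable {K : Type*} [Field K]

theorem mk_eq_one_iff (A : GL (Fin 2) K) :
    (QuotientGroup.mk A : PGL2 K) = 1 ↔ ∃ a : K, (A : Matrix (Fin 2) (Fin 2) K) = a • 1 := by
  rw [QuotientGroup.eq_one_iff, GeneralLinearGroup.mem_center_iff_val_mem_range_scalar]
  simp [scalar_apply, smul_one_eq_diagonal, eq_comm]

theorem exists_pow_eq_smul_one {A : GL (Fin 2) K}
    (hA : IsOfFinOrder (QuotientGroup.mk A : PGL2 K)) :
    ∃ n, 0 < n ∧ ∃ r : K, (A : Matrix (Fin 2) (Fin 2) K) ^ n = r • 1 := by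
  obtain ⟨n, hn, hAn⟩ := isOfFinOrder_iff_pow_eq_one.1 hA
  rw [← QuotientGroup.mk_pow, mk_eq_one_iff, Units.val_pow_eq_pow_val] at hAn
  exact ⟨n, hn, hAn⟩

theorem orderOf_mk_eq_two {A : GL (Fin 2) K}
    (h2 : ∃ a : K, (A : Matrix (Fin 2) (Fin 2) K) ^ 2 = a • 1)
    (h1 : ∀ a : K, (A : Matrix (Fin 2) (Fin 2) K) ≠ a • 1) :
    orderOf (QuotientGroup.mk A : PGL2 K) = 2 := by
  refine orderOf_eq_prime ?_ ?_
  · rwa [← QuotientGroup.mk_pow, mk_eq_one_iff, Units.val_pow_eq_pow_val]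
  · rw [Ne, mk_eq_one_iff, not_exists]
    exact h1

theorem exists_eq_conj_of_isConj (A : GL (Fin 2) K) {D : Matrix (Fin 2) (Fin 2) K}
    (h : IsConj D A) :
    ∃ (c : PGL2 K) (d : GL (Fin 2) K), (d : Matrix (Fin 2) (Fin 2) K) = D ∧
      (QuotientGroup.mk A : PGL2 K) = c * QuotientGroup.mk d * c⁻¹ := by
  obtain ⟨c, hc⟩ := h
  refine ⟨QuotientGroup.mk c, c⁻¹ * A * c, ?_, ?_⟩
  · rw [Units.val_mul, Units.val_mul, mul_assoc, ← hc.eq, ← mul_assoc, Units.inv_mul, one_mul]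
  · rw [← QuotientGroup.mk_inv, ← QuotientGroup.mk_mul, ← QuotientGroup.mk_mul]
    congr 1
    group

end PGL2

/-- Over a field `K` of characteristic zero containing all roots of
unity, any element of `PGL(2,K)` of finite order is either diagonalisable (conjugate
to the class of a diagonal matrix) or an involution conjugate to the class of
`[[0,t],[1,0]]` for some `t ∈ K*`. -/
theorem pgl2_finite_order_diagonalisable_or_antidiagonal_involution
    (K : Type*) [Field K] [CharZero K]
    (hroots : ∀ n : ℕ, 0 < n → ∃ ζ : K, IsPrimitiveRoot ζ n)
    (g : PGL2 K) (hg : IsOfFinOrder g) :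
    (∃ (c : PGL2 K) (d : GL (Fin 2) K) (a b : K),
        (d : Matrix (Fin 2) (Fin 2) K) = !![a, 0; 0, b] ∧
        g = c * (QuotientGroup.mk d) * c⁻¹) ∨
    (orderOf g = 2 ∧
      ∃ (c : PGL2 K) (m : GL (Fin 2) K) (t : K), t ≠ 0 ∧
        (m : Matrix (Fin 2) (Fin 2) K) = !![0, t; 1, 0] ∧
        g = c * (QuotientGroup.mk m) * c⁻¹) := by
  obtain ⟨A, rfl⟩ := QuotientGroup.mk_surjective g
  obtain ⟨n, hn, r, hAn⟩ := PGL2.exists_pow_eq_smul_one hg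
  have hδ : (A : Matrix (Fin 2) (Fin 2) K).det ≠ 0 := A.det_ne_zero
  by_cases hscalar : ∃ a : K, (A : Matrix (Fin 2) (Fin 2) K) = a • 1
  · obtain ⟨a, ha⟩ := hscalar
    exact .inl ⟨1, A, a, a, by rw [ha, smul_one_eq_diagonal, diagonal_fin_two], by simp⟩
  push Not at hscalar
  by_cases hτ : (A : Matrix (Fin 2) (Fin 2) K).trace = 0
  · obtain ⟨c, m, hm, hA⟩ := PGL2.exists_eq_conj_of_isConj A (isConj_companion_fin_two hscalar)
    refine .inr ⟨PGL2.orderOf_mk_eq_two ⟨-(A : Matrix (Fin 2) (Fin 2) K).det, ?_⟩ hscalar,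
      c, m, _, neg_ne_zero.2 hδ, by rw [hm, hτ], hA⟩
    rw [sq_eq_trace_smul_sub_det_smul, hτ, zero_smul, zero_sub, neg_smul]
  · obtain ⟨ζ, hζ⟩ := hroots n hn
    obtain ⟨a, b, hab⟩ := exists_isConj_diagonal_fin_two hscalar hδ hτ hn hAn hζ
    obtain ⟨c, d, hd, hA⟩ := PGL2.exists_eq_conj_of_isConj A hab
    exact .inl ⟨c, d, a, b, hd, hA⟩
end

section
/- Let K be a field, h ∈ K*, and let σ ∈ PGL(2,K) be the class of the matrix [[0,h],[1,0]]. The centraliser N_σ of σ in PGL(2,K) equals the set of classes of matrices of the form [[a, ε·b·h],[b, ε·a]] with a, b ∈ K (not both zero) and ε ∈ {1,-1}. -/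
private lemma fin2_mat_eq {α : Type*} {a b c d a' b' c' d' : α}
    (h : (!![a, b; c, d] : Matrix (Fin 2) (Fin 2) α) = !![a', b'; c', d']) :
    a = a' ∧ b = b' ∧ c = c' ∧ d = d' := by
  have e : ∀ i j, (!![a, b; c, d] : Matrix (Fin 2) (Fin 2) α) i j = !![a', b'; c', d'] i j :=
    fun i j => by rw [h]
  exact ⟨by simpa using e 0 0, by simpa using e 0 1, by simpa using e 1 0, by simpa using e 1 1⟩

private lemma fin2_mat_congr {α : Type*} {a b c d a' b' c' d' : α}
    (h1 : a = a') (h2 : b = b') (h3 : c = c') (h4 : d = d') :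
    (!![a, b; c, d] : Matrix (Fin 2) (Fin 2) α) = !![a', b'; c', d'] := by
  rw [h1, h2, h3, h4]

private lemma fin2_neg {α : Type*} [Ring α] (a b c d : α) :
    -(!![a, b; c, d] : Matrix (Fin 2) (Fin 2) α) = !![-a, -b; -c, -d] := by
  ext i j
  fin_cases i <;> fin_cases j <;> simp

private lemma neg_one_mem_center {K : Type*} [Field K] :
    (-1 : GL (Fin 2) K) ∈ Subgroup.center (GL (Fin 2) K) :=
  Subgroup.mem_center_iff.mpr fun g => by rw [mul_neg_one, neg_one_mul]

/-- Let `K` be a field, `h ∈ K*`, and `σ ∈ PGL(2,K)` the class of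
`[[0,h],[1,0]]`. The centraliser of `σ` in `PGL(2,K)` consists exactly of the classes of
the matrices `[[a, ε·b·h],[b, ε·a]]` with `a, b ∈ K` not both zero and `ε = ±1`. -/
theorem pgl2_centralizer_antidiag
    (K : Type*) [Field K] (h : K) (hh : h ≠ 0)
    (σel : GL (Fin 2) K)
    (hσ : (σel : Matrix (Fin 2) (Fin 2) K) = !![0, h; 1, 0])
    (x : PGL2 K) :
    x ∈ Subgroup.centralizer ({QuotientGroup.mk σel} : Set (PGL2 K)) ↔
      ∃ (m : GL (Fin 2) K) (a b ε : K), (ε = 1 ∨ ε = -1) ∧ ¬(a = 0 ∧ b = 0) ∧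
        (m : Matrix (Fin 2) (Fin 2) K) = !![a, ε * b * h; b, ε * a] ∧
        x = QuotientGroup.mk m := by
  constructor
  · intro hx
    obtain ⟨m, rfl⟩ := QuotientGroup.mk_surjective x
    have hcomm : (QuotientGroup.mk (σel * m) : PGL2 K) = QuotientGroup.mk (m * σel) := by
      have := Subgroup.mem_centralizer_iff.mp hx _ (Set.mem_singleton _)
      simpa [QuotientGroup.mk_mul] using this
    have hz : (σel * m)⁻¹ * (m * σel) ∈ Subgroup.center (GL (Fin 2) K) :=
      QuotientGroup.eq.mp hcomm
    set z : GL (Fin 2) K := (σel * m)⁻¹ * (m * σel) with hzdef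
    -- z is a scalar matrix
    have hg1 : ∃ g : GL (Fin 2) K, (g : Matrix (Fin 2) (Fin 2) K) = !![1, 1; 0, 1] := by
      refine ⟨⟨!![1, 1; 0, 1], !![1, -1; 0, 1], ?_, ?_⟩, rfl⟩ <;>
        · rw [Matrix.mul_fin_two, Matrix.one_fin_two]; norm_num
    have hg2 : ∃ g : GL (Fin 2) K, (g : Matrix (Fin 2) (Fin 2) K) = !![1, 0; 1, 1] := by
      refine ⟨⟨!![1, 0; 1, 1], !![1, 0; -1, 1], ?_, ?_⟩, rfl⟩ <;>
        · rw [Matrix.mul_fin_two, Matrix.one_fin_two]; norm_num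
    obtain ⟨g1, hG1⟩ := hg1
    obtain ⟨g2, hG2⟩ := hg2
    set Z : Matrix (Fin 2) (Fin 2) K := (z : Matrix (Fin 2) (Fin 2) K) with hZdef
    set p := Z 0 0 with hp
    have hZeta : Z = !![Z 0 0, Z 0 1; Z 1 0, Z 1 1] := Matrix.eta_fin_two Z
    have hc1 : (!![1, 1; 0, 1] : Matrix (Fin 2) (Fin 2) K) * Z = Z * !![1, 1; 0, 1] := by
      have := Subgroup.mem_center_iff.mp hz g1
      have := congrArg (Units.val) this
      simpa [hG1] using this
    have hc2 : (!![1, 0; 1, 1] : Matrix (Fin 2) (Fin 2) K) * Z = Z * !![1, 0; 1, 1] := by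
      have := Subgroup.mem_center_iff.mp hz g2
      have := congrArg (Units.val) this
      simpa [hG2] using this
    rw [hZeta, Matrix.mul_fin_two, Matrix.mul_fin_two] at hc1 hc2
    obtain ⟨e11, e12, e13, e14⟩ := fin2_mat_eq hc1
    obtain ⟨e21, e22, e23, e24⟩ := fin2_mat_eq hc2
    have hZ10 : Z 1 0 = 0 := by linear_combination e11
    have hZ01 : Z 0 1 = 0 := by linear_combination -e21
    have hZ11 : Z 1 1 = Z 0 0 := by linear_combination e12
    have hZscalar : Z = !![p, 0; 0, p] := by
      rw [hZeta, hZ10, hZ01, hZ11, hp]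
    -- main matrix equation
    have hmain : (m : Matrix (Fin 2) (Fin 2) K) * σel =
        ((σel : Matrix (Fin 2) (Fin 2) K) * m) * Z := by
      have hu : (σel * m) * z = m * σel := by rw [hzdef, mul_inv_cancel_left]
      have := congrArg (Units.val) hu
      simpa using this.symm
    set M : Matrix (Fin 2) (Fin 2) K := (m : Matrix (Fin 2) (Fin 2) K) with hM
    have hMeta : M = !![M 0 0, M 0 1; M 1 0, M 1 1] := Matrix.eta_fin_two M
    set A := M 0 0; set B := M 0 1; set C := M 1 0; set D := M 1 1
    rw [hMeta, hσ, hZscalar, Matrix.mul_fin_two, Matrix.mul_fin_two, Matrix.mul_fin_two] at hmain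
    obtain ⟨f1, f2, f3, f4⟩ := fin2_mat_eq hmain
    have hdet : M.det ≠ 0 := by
      have := (Matrix.isUnit_iff_isUnit_det M).mp m.isUnit
      exact this.ne_zero
    rw [Matrix.det_fin_two] at hdet
    have hAC : ¬(A = 0 ∧ C = 0) := by
      rintro ⟨hA0, hC0⟩
      apply hdet
      show A * D - B * C = 0
      rw [hA0, hC0]; ring
    have hDA : D = p * A := by linear_combination f3
    have hBC : B = p * C * h := by linear_combination f1
    have hp2 : p * p = 1 := by
      rcases not_and_or.mp hAC with hA | hC
      · have h1 : A * h * (1 - p * p) = 0 := by linear_combination f2 + h * p * hDA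
        rcases mul_eq_zero.mp h1 with h2 | h2
        · exact absurd h2 (mul_ne_zero hA hh)
        · linear_combination -h2
      · have h1 : C * h * (1 - p * p) = 0 := by linear_combination f4 + p * hBC
        rcases mul_eq_zero.mp h1 with h2 | h2
        · exact absurd h2 (mul_ne_zero hC hh)
        · linear_combination -h2
    refine ⟨m, A, C, p, mul_self_eq_one_iff.mp hp2, hAC, ?_, rfl⟩
    rw [← hM, hMeta, hBC, hDA]
  · rintro ⟨m, a, b, ε, hε, hab, hm, rfl⟩
    refine Subgroup.mem_centralizer_iff.mpr ?_
    rintro g rfl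
    show QuotientGroup.mk σel * QuotientGroup.mk m = QuotientGroup.mk m * QuotientGroup.mk σel
    rw [← QuotientGroup.mk_mul, ← QuotientGroup.mk_mul]
    rw [QuotientGroup.eq]
    rcases hε with rfl | rfl
    · have hcv : m * σel = σel * m := by
        apply Units.ext
        rw [Units.val_mul, Units.val_mul, hm, hσ, Matrix.mul_fin_two, Matrix.mul_fin_two]
        exact fin2_mat_congr (by ring) (by ring) (by ring) (by ring)
      rw [hcv, inv_mul_cancel]
      exact Subgroup.one_mem _
    · have hcv : m * σel = (σel * m) * (-1) := by
        apply Units.ext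
        rw [Units.val_mul, Units.val_mul, Units.val_neg, Units.val_one, mul_neg_one,
          Units.val_mul, hm, hσ, Matrix.mul_fin_two, Matrix.mul_fin_two, fin2_neg]
        exact fin2_mat_congr (by ring) (by ring) (by ring) (by ring)
      rw [hcv, inv_mul_cancel_left]
      exact neg_one_mem_center
end

section
/- Let K be a field, h ∈ K* not a square in K, σ ∈ PGL(2,K) the class of [[0,h],[1,0]], and N_σ⁰ the group of classes of invertible matrices [[a, bh],[b, a]] with a,b ∈ K. Then the map sending the class of [[a, bh],[b, a]] to the class of a + b√h in K(√h)*/K* is a group isomorphism from N_σ⁰ onto K(√h)*/K*. -/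
set_option maxHeartbeats 1000000
open Polynomial

/-!
Sending `a + b√h` to `a + bσ`, where `σ = !![0, h; 1, 0]` satisfies `σ² = h`, is an injective
`K`-algebra map `K(√h) → M₂(K)`: the matrix of multiplication by `a + b√h` in the basis
`(1, √h)`. On units it lands in `GL₂(K)`; its image in `PGL₂(K)` is `N_σ⁰`, because
`a + b√h` is a unit as soon as its norm `a² - b²h = det` is, and its kernel is `K*`, because the
center of `GL₂(K)` consists of the scalars, which are the images of `K*`.
-/

theorem MonoidHom.exists_mulEquiv_quotient_of_ker_eq_of_range_eq {G H : Type*} [Group G]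
    [Group H] (f : G →* H) {M : Subgroup G} [M.Normal] {N : Subgroup H}
    (hker : f.ker = M) (hrange : f.range = N) :
    ∃ e : N ≃* G ⧸ M, ∀ (g : G) (x : H) (hx : x ∈ N), f g = x → e ⟨x, hx⟩ = g := by
  refine ⟨(MulEquiv.subgroupCongr hrange.symm).trans
    ((QuotientGroup.quotientKerEquivRange f).symm.trans (QuotientGroup.quotientMulEquivOfEq hker)),
    ?_⟩
  rintro g _ hx rfl
  have hg : (QuotientGroup.quotientKerEquivRange f).symm ⟨f g, hrange ▸ hx⟩ = g :=
    (MulEquiv.symm_apply_eq _).mpr rfl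
  exact congrArg (QuotientGroup.quotientMulEquivOfEq hker) hg

namespace AlgHom

variable {K A n : Type*} [CommRing K] [Ring A] [Algebra K A] [Fintype n] [DecidableEq n]

def unitsToPGL (φ : A →ₐ[K] Matrix n n K) : Aˣ →* GL n K ⧸ Subgroup.center (GL n K) :=
  (QuotientGroup.mk' _).comp (Units.map φ)

theorem ker_unitsToPGL {φ : A →ₐ[K] Matrix n n K} (hφ : Function.Injective φ) :
    φ.unitsToPGL.ker = (Units.map (algebraMap K A).toMonoidHom).range := by
  have hscalar : Matrix.GeneralLinearGroup.scalar n =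
      (Units.map (φ : A →* Matrix n n K)).comp (Units.map (algebraMap K A).toMonoidHom) := by
    ext c : 2
    exact (φ.commutes c).symm
  rw [unitsToPGL, ← MonoidHom.comap_ker, QuotientGroup.ker_mk',
    Matrix.GeneralLinearGroup.center_eq_range_scalar, hscalar, MonoidHom.range_comp]
  exact Subgroup.comap_map_eq_self_of_injective
    (Units.map_injective (f := (φ : A →* Matrix n n K)) hφ) _

end AlgHom

namespace AdjoinRoot

variable {K : Type*} [CommRing K] (h : K)

theorem root_X_pow_two_sub_C_sq : root (X ^ 2 - C h) ^ 2 = algebraMap K _ h := by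
  have := eval₂_root (X ^ 2 - C h)
  rw [eval₂_sub, eval₂_X_pow, eval₂_C, sub_eq_zero] at this
  rwa [algebraMap_eq]

theorem exists_eq_add_mul_root_X_pow_two_sub_C [Nontrivial K] (z : AdjoinRoot (X ^ 2 - C h)) :
    ∃ a b : K, z = algebraMap K _ a + algebraMap K _ b * root (X ^ 2 - C h) := by
  have hmonic := monic_X_pow_sub_C h two_ne_zero
  obtain ⟨p, rfl⟩ := mk_surjective z
  have hdeg : (p %ₘ (X ^ 2 - C h)).natDegree ≤ 1 := by
    have := natDegree_modByMonic_lt p hmonic fun h1 => by simpa using congrArg natDegree h1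
    rw [natDegree_X_pow_sub_C] at this
    omega
  obtain ⟨b, a, hab⟩ := exists_eq_X_add_C_of_natDegree_le_one hdeg
  refine ⟨a, b, ?_⟩
  rw [← mk_leftInverse hmonic (mk _ p), modByMonicHom_mk, hab]
  simp only [map_add, map_mul, mk_C, mk_X, algebraMap_eq]
  ring

variable {h} in
theorem isUnit_add_mul_root_X_pow_two_sub_C {a b : K} (hab : IsUnit (a * a - b * h * b)) :
    IsUnit (algebraMap K (AdjoinRoot (X ^ 2 - C h)) a + algebraMap K _ b * root (X ^ 2 - C h)) := by
  have hconj : (algebraMap K (AdjoinRoot (X ^ 2 - C h)) a + algebraMap K _ b * root (X ^ 2 - C h)) *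
      (algebraMap K _ a - algebraMap K _ b * root (X ^ 2 - C h)) =
      algebraMap K _ (a * a - b * h * b) := by
    simp only [map_sub, map_mul]
    linear_combination
      (-(algebraMap K (AdjoinRoot (X ^ 2 - C h)) b) ^ 2) * root_X_pow_two_sub_C_sq h
  exact isUnit_of_mul_isUnit_left (hconj ▸ hab.map _)

/-- The matrix of multiplication in the basis `(1, √h)`: `√h` acts as `σ = !![0, h; 1, 0]`,
whose square is `h`. -/
noncomputable def sqrtLeftMulMatrix : AdjoinRoot (X ^ 2 - C h) →ₐ[K] Matrix (Fin 2) (Fin 2) K :=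
  Ideal.Quotient.liftₐ _ (aeval !![0, h; 1, 0]) fun p hp => by
    obtain ⟨q, rfl⟩ := Ideal.mem_span_singleton'.mp hp
    have hσ : aeval !![0, h; 1, 0] (X ^ 2 - C h) = 0 := by
      rw [map_sub, aeval_X_pow, aeval_C, Matrix.algebraMap_eq_diagonal, sq, Matrix.mul_fin_two]
      ext i j
      fin_cases i <;> fin_cases j <;> simp
    rw [map_mul, hσ, mul_zero]

theorem sqrtLeftMulMatrix_add_mul_root (a b : K) :
    sqrtLeftMulMatrix h (algebraMap K _ a + algebraMap K _ b * root (X ^ 2 - C h)) =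
      !![a, b * h; b, a] := by
  have hroot : sqrtLeftMulMatrix h (root (X ^ 2 - C h)) = !![0, h; 1, 0] := aeval_X _
  rw [map_add, map_mul, AlgHom.commutes, AlgHom.commutes, hroot, ← Algebra.smul_def,
    Algebra.algebraMap_eq_smul_one]
  ext i j
  fin_cases i <;> fin_cases j <;> simp

theorem sqrtLeftMulMatrix_injective [Nontrivial K] : Function.Injective (sqrtLeftMulMatrix h) := by
  refine (injective_iff_map_eq_zero _).mpr fun z hz => ?_
  obtain ⟨a, b, rfl⟩ := exists_eq_add_mul_root_X_pow_two_sub_C h z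
  rw [sqrtLeftMulMatrix_add_mul_root, ← Matrix.ext_iff] at hz
  have ha : a = 0 := by simpa using hz 0 0
  have hb : b = 0 := by simpa using hz 1 0
  simp [ha, hb]

variable {h} in
theorem unitsToPGL_sqrtLeftMulMatrix_eq_mk {u : (AdjoinRoot (X ^ 2 - C h))ˣ}
    {m : GL (Fin 2) K} {a b : K}
    (hu : (u : AdjoinRoot (X ^ 2 - C h)) = algebraMap K _ a + algebraMap K _ b * root (X ^ 2 - C h))
    (hm : (m : Matrix (Fin 2) (Fin 2) K) = !![a, b * h; b, a]) :
    (sqrtLeftMulMatrix h).unitsToPGL u = QuotientGroup.mk m := by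
  refine congrArg QuotientGroup.mk (Units.ext ?_)
  change sqrtLeftMulMatrix h u = m
  rw [hu, hm, sqrtLeftMulMatrix_add_mul_root]

theorem mem_range_unitsToPGL_sqrtLeftMulMatrix [Nontrivial K]
    {x : GL (Fin 2) K ⧸ Subgroup.center (GL (Fin 2) K)} :
    x ∈ (sqrtLeftMulMatrix h).unitsToPGL.range ↔
      ∃ (m : GL (Fin 2) K) (a b : K),
        (m : Matrix (Fin 2) (Fin 2) K) = !![a, b * h; b, a] ∧ x = QuotientGroup.mk m := by
  constructor
  · rintro ⟨u, rfl⟩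
    obtain ⟨a, b, hu⟩ := exists_eq_add_mul_root_X_pow_two_sub_C h u
    let m : GL (Fin 2) K := Units.map (sqrtLeftMulMatrix h : _ →* Matrix (Fin 2) (Fin 2) K) u
    have hm : (m : Matrix (Fin 2) (Fin 2) K) = !![a, b * h; b, a] := by
      change sqrtLeftMulMatrix h u = _
      rw [hu, sqrtLeftMulMatrix_add_mul_root]
    exact ⟨m, a, b, hm, unitsToPGL_sqrtLeftMulMatrix_eq_mk hu hm⟩
  · rintro ⟨m, a, b, hm, rfl⟩
    have hdet : IsUnit (a * a - b * h * b) := by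
      simpa [hm, Matrix.det_fin_two_of] using Matrix.isUnits_det_units m
    exact ⟨(isUnit_add_mul_root_X_pow_two_sub_C hdet).unit,
      unitsToPGL_sqrtLeftMulMatrix_eq_mk rfl hm⟩

end AdjoinRoot

theorem pgl2_centralizer_iso_quadratic_extension_general
    (K : Type*) [Field K] (h : K)
    (N0 : Subgroup (PGL2 K))
    (hN0 : ∀ x : PGL2 K, x ∈ N0 ↔
      ∃ (m : GL (Fin 2) K) (a b : K),
        (m : Matrix (Fin 2) (Fin 2) K) = !![a, b * h; b, a] ∧
        x = QuotientGroup.mk m) :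
    ∃ φ : N0 ≃* ((AdjoinRoot (X ^ 2 - C h))ˣ ⧸
        (Units.map (algebraMap K (AdjoinRoot (X ^ 2 - C h))).toMonoidHom).range),
      ∀ (m : GL (Fin 2) K) (a b : K),
        (m : Matrix (Fin 2) (Fin 2) K) = !![a, b * h; b, a] →
        ∀ (hx : (QuotientGroup.mk m : PGL2 K) ∈ N0)
          (u : (AdjoinRoot (X ^ 2 - C h))ˣ),
          (u : AdjoinRoot (X ^ 2 - C h)) =
            algebraMap K (AdjoinRoot (X ^ 2 - C h)) a +
              algebraMap K (AdjoinRoot (X ^ 2 - C h)) b * AdjoinRoot.root (X ^ 2 - C h) →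
          φ ⟨QuotientGroup.mk m, hx⟩ = QuotientGroup.mk u := by
  have hrange : (AdjoinRoot.sqrtLeftMulMatrix h).unitsToPGL.range = N0 := by
    ext x
    rw [hN0, AdjoinRoot.mem_range_unitsToPGL_sqrtLeftMulMatrix]
  obtain ⟨e, he⟩ := MonoidHom.exists_mulEquiv_quotient_of_ker_eq_of_range_eq _
    (AlgHom.ker_unitsToPGL (AdjoinRoot.sqrtLeftMulMatrix_injective h)) hrange
  exact ⟨e, fun m a b hm hx u hu =>
    he u _ hx (AdjoinRoot.unitsToPGL_sqrtLeftMulMatrix_eq_mk hu hm)⟩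

/-- Let `K` be a field, `h ∈ K*` not a square, `σ` the class of
`[[0,h],[1,0]]` in `PGL(2,K)`, and `N_σ⁰` the group of classes of the invertible
matrices `[[a,bh],[b,a]]`. Then sending the class of `[[a,bh],[b,a]]` to the class of
`a + b√h` is a group isomorphism from `N_σ⁰` onto `K(√h)*/K*`, where
`K(√h) = K[X]/(X² - h)`. -/
theorem pgl2_centralizer_iso_quadratic_extension
    (K : Type*) [Field K] (h : K) (hh : h ≠ 0)
    (hns : ¬∃ s : K, s ^ 2 = h)
    [Fact (Irreducible (X ^ 2 - C h))]
    (N0 : Subgroup (PGL2 K))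
    (hN0 : ∀ x : PGL2 K, x ∈ N0 ↔
      ∃ (m : GL (Fin 2) K) (a b : K),
        (m : Matrix (Fin 2) (Fin 2) K) = !![a, b * h; b, a] ∧
        x = QuotientGroup.mk m) :
    ∃ φ : N0 ≃* ((AdjoinRoot (X ^ 2 - C h))ˣ ⧸
        (Units.map (algebraMap K (AdjoinRoot (X ^ 2 - C h))).toMonoidHom).range),
      ∀ (m : GL (Fin 2) K) (a b : K),
        (m : Matrix (Fin 2) (Fin 2) K) = !![a, b * h; b, a] →
        ∀ (hx : (QuotientGroup.mk m : PGL2 K) ∈ N0)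
          (u : (AdjoinRoot (X ^ 2 - C h))ˣ),
          (u : AdjoinRoot (X ^ 2 - C h)) =
            algebraMap K (AdjoinRoot (X ^ 2 - C h)) a +
              algebraMap K (AdjoinRoot (X ^ 2 - C h)) b * AdjoinRoot.root (X ^ 2 - C h) →
          φ ⟨QuotientGroup.mk m, hx⟩ = QuotientGroup.mk u :=
  pgl2_centralizer_iso_quadratic_extension_general K h N0 hN0
end

section
/- Let S ⊂ ℙ(3,1,1,2) be the smooth surface of equation w² = z³ + λx²y²z + ax⁶ + bx³y³ + cy⁶ (with a,b,c,λ ∈ ℂ, and smoothness forcing ac ≠ 0), and let g be the automorphism induced by (w:x:y:z) ↦ (-w:x:ωy:ωz), ω a primitive cube root of unity (an order-6 automorphism). Choose α,γ,μ ∈ ℂ* with α³ = a, γ³ = c, μ² = ac. Then the map (w:x:y:z) ↦ (μw : γy : αx : αγz) induces an automorphism of S that conjugates g to g⁻¹ (equivalently, conjugates the two generators of the cyclic group ⟨g⟩ of order 6 that act the same way). -/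
/-- Affine cone coordinates for `ℙ(3,1,1,2)`: points are 4-tuples `(w,x,y,z)`. -/
abbrev WP3112 := ℂ × ℂ × ℂ × ℂ

/-- The defining polynomial `w² - (z³ + λx²y²z + ax⁶ + bx³y³ + cy⁶)` of the
del Pezzo surface `S ⊂ ℙ(3,1,1,2)` of family #16. -/
def dpPoly (lam a b c : ℂ) (p : WP3112) : ℂ :=
  p.1 ^ 2 - (p.2.2.2 ^ 3 + lam * p.2.1 ^ 2 * p.2.2.1 ^ 2 * p.2.2.2 +
    a * p.2.1 ^ 6 + b * p.2.1 ^ 3 * p.2.2.1 ^ 3 + c * p.2.2.1 ^ 6)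

/-- The order-6 automorphism `(w:x:y:z) ↦ (-w:x:ωy:ωz)`. -/
def dpGen (ω : ℂ) (p : WP3112) : WP3112 := (-p.1, p.2.1, ω * p.2.2.1, ω * p.2.2.2)

/-- The inverse automorphism `(w:x:y:z) ↦ (-w:x:ω²y:ω²z)`. -/
def dpGenInv (ω : ℂ) (p : WP3112) : WP3112 :=
  (-p.1, p.2.1, ω ^ 2 * p.2.2.1, ω ^ 2 * p.2.2.2)

/-- The map `(w:x:y:z) ↦ (μw : γy : αx : αγz)`. -/
def dpConj (α γ μ : ℂ) (p : WP3112) : WP3112 :=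
  (μ * p.1, γ * p.2.2.1, α * p.2.1, α * γ * p.2.2.2)

/-- The weighted scaling by `s` on `ℙ(3,1,1,2)`: `(w,x,y,z) ↦ (s³w, sx, sy, s²z)`,
which acts trivially on the weighted projective space. -/
def wScale (s : ℂ) (p : WP3112) : WP3112 :=
  (s ^ 3 * p.1, s * p.2.1, s * p.2.2.1, s ^ 2 * p.2.2.2)

/-- Let `S ⊂ ℙ(3,1,1,2)` be the smooth surface
`w² = z³ + λx²y²z + ax⁶ + bx³y³ + cy⁶` (`ac ≠ 0`), with the order-6 automorphism `g`
induced by `(w:x:y:z) ↦ (-w:x:ωy:ωz)`. Choosing `α³ = a`, `γ³ = c`, `μ² = ac`, the map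
`(w:x:y:z) ↦ (μw : γy : αx : αγz)` sends the defining polynomial to `ac` times itself
(hence induces an automorphism of `S`) and conjugates `g` to `g⁻¹` (up to the trivial
weighted scaling by `ω`). -/
theorem delPezzo_family16_generators_conjugate
    (lam a b c : ℂ) (hac : a * c ≠ 0)
    (ω : ℂ) (hω : IsPrimitiveRoot ω 3)
    (α γ μ : ℂ) (hα0 : α ≠ 0) (hγ0 : γ ≠ 0) (hμ0 : μ ≠ 0)
    (hα : α ^ 3 = a) (hγ : γ ^ 3 = c) (hμ : μ ^ 2 = a * c) :
    (∀ p : WP3112, dpPoly lam a b c (dpGen ω p) = dpPoly lam a b c p) ∧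
    (∀ p : WP3112, dpGen ω (dpGenInv ω p) = p ∧ dpGenInv ω (dpGen ω p) = p) ∧
    (∀ p : WP3112, dpPoly lam a b c (dpConj α γ μ p) = (a * c) * dpPoly lam a b c p) ∧
    (∀ p : WP3112, dpConj α γ μ (dpGen ω p) = wScale ω (dpGenInv ω (dpConj α γ μ p))) := by

  have hω3 : ω ^ 3 = 1 := hω.pow_eq_one
  refine ⟨fun p => ?_, fun p => ⟨?_, ?_⟩, fun p => ?_, fun p => ?_⟩
  · simp only [dpPoly, dpGen]
    ring_nf
    rw [show ω ^ 6 = (ω ^ 3) ^ 2 by ring, hω3]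
    ring
  · simp only [dpGen, dpGenInv]
    rw [show ω * (ω ^ 2 * p.2.2.1) = ω ^ 3 * p.2.2.1 by ring,
        show ω * (ω ^ 2 * p.2.2.2) = ω ^ 3 * p.2.2.2 by ring, hω3]
    simp
  · simp only [dpGen, dpGenInv]
    rw [show ω ^ 2 * (ω * p.2.2.1) = ω ^ 3 * p.2.2.1 by ring,
        show ω ^ 2 * (ω * p.2.2.2) = ω ^ 3 * p.2.2.2 by ring, hω3]
    simp
  · simp only [dpPoly, dpConj]
    subst hα hγ
    rw [show (μ * p.1) ^ 2 = μ ^ 2 * p.1 ^ 2 by ring, hμ]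
    ring
  · simp only [dpConj, dpGen, dpGenInv, wScale]
    refine Prod.ext ?_ (Prod.ext ?_ (Prod.ext ?_ ?_)) <;> simp only
    · rw [show ω ^ 3 * -(μ * p.1) = -(ω ^ 3 * (μ * p.1)) by ring, hω3]; ring
    · ring
    · rw [show ω * (ω ^ 2 * (α * p.2.1)) = ω ^ 3 * (α * p.2.1) by ring, hω3]; ring
    · rw [show ω ^ 2 * (ω ^ 2 * (α * γ * p.2.2.2)) = ω ^ 3 * (ω * (α * γ * p.2.2.2)) by ring, hω3]; ring
end

section
/- Let S ⊂ ℙ(3,1,1,2) be the smooth surface w² = z³ + z(ax⁴ + bx²y² + cy⁴) + xy(a'x⁴ + b'x²y² + c'y⁴) with a,c,a',c' ∈ ℂ*, a/c = -a'/c', and bb' ≠ 0. Let g be the order-4 generator induced by (w:x:y:z) ↦ (iw : x : -y : -z). Then no automorphism of ℙ(3,1,1,2) of the form (w:x:y:z) ↦ (μw : γy : αx : νz) (α,γ,μ,ν ∈ ℂ*) preserves the equation of S; consequently the two relevant generators of the cyclic group acting on S are not conjugate by such an automorphism. -/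
/-- The defining polynomial
`w² - (z³ + z(ax⁴ + bx²y² + cy⁴) + xy(a'x⁴ + b'x²y² + c'y⁴))` of the surface
`S ⊂ ℙ(3,1,1,2)` of family #6. -/
def dp6Poly (a b c a' b' c' : ℂ) (p : WP3112) : ℂ :=
  p.1 ^ 2 - (p.2.2.2 ^ 3 +
    p.2.2.2 * (a * p.2.1 ^ 4 + b * p.2.1 ^ 2 * p.2.2.1 ^ 2 + c * p.2.2.1 ^ 4) +
    p.2.1 * p.2.2.1 *
      (a' * p.2.1 ^ 4 + b' * p.2.1 ^ 2 * p.2.2.1 ^ 2 + c' * p.2.2.1 ^ 4))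

/-- Let `S ⊂ ℙ(3,1,1,2)` be the smooth surface
`w² = z³ + z(ax⁴+bx²y²+cy⁴) + xy(a'x⁴+b'x²y²+c'y⁴)` with `a,c,a',c' ∈ ℂ*`,
`a/c = -a'/c'` and `bb' ≠ 0`. Then no automorphism of `ℙ(3,1,1,2)` of the form
`(w:x:y:z) ↦ (μw : γy : αx : νz)` preserves the equation of `S` (i.e. sends the
defining polynomial to a nonzero scalar multiple of itself); consequently the two
relevant generators of the cyclic group acting on `S` are not conjugate by such an
automorphism. -/
theorem delPezzo_family6_generators_not_conjugate
    (a b c a' b' c' : ℂ)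
    (ha : a ≠ 0) (hc : c ≠ 0) (ha' : a' ≠ 0) (hc' : c' ≠ 0)
    (hratio : a / c = -(a' / c')) (hbb' : b * b' ≠ 0) :
    ¬ ∃ (α γ μ ν : ℂ), α ≠ 0 ∧ γ ≠ 0 ∧ μ ≠ 0 ∧ ν ≠ 0 ∧
      ∃ k : ℂ, k ≠ 0 ∧
        ∀ p : WP3112,
          dp6Poly a b c a' b' c' (μ * p.1, γ * p.2.2.1, α * p.2.1, ν * p.2.2.2) =
            k * dp6Poly a b c a' b' c' p := by
  rintro ⟨α, γ, μ, ν, hα, hγ, hμ, hν, k, hk, heq⟩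
  have hb : b ≠ 0 := fun h => hbb' (by rw [h]; ring)
  have hb' : b' ≠ 0 := fun h => hbb' (by rw [h]; ring)
  have e1 := heq (0, 0, 0, 1)
  have e2 := heq (0, 1, 0, 1)
  have e3 := heq (0, 0, 1, 1)
  have e4 := heq (0, 1, 1, 1)
  have e5 := heq (0, 1, 1, 0)
  have e6 := heq (0, 2, 1, 0)
  have e7 := heq (0, 1, 2, 0)
  simp only [dp6Poly] at e1 e2 e3 e4 e5 e6 e7
  have h1 : ν ^ 3 = k := by linear_combination -e1
  have hA : ν * c * α ^ 4 = k * a := by linear_combination -h1 - e2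
  have hC : ν * a * γ ^ 4 = k * c := by linear_combination -h1 - e3
  have hA' : α ^ 5 * γ * c' = k * a' := by
    linear_combination ((4:ℂ)/9) * e5 - ((4:ℂ)/90) * e6 - ((1:ℂ)/90) * e7
  have hB' : α ^ 3 * γ ^ 3 * b' = k * b' := by
    linear_combination (-(17:ℂ)/9) * e5 + ((1:ℂ)/18) * e6 + ((1:ℂ)/18) * e7
  have hB : ν * b * α ^ 2 * γ ^ 2 = k * b := by
    linear_combination -e4 - h1 - hA - hC + e5
  have hkb : ν * α ^ 2 * γ ^ 2 = k := mul_right_cancel₀ hb (by linear_combination hB)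
  have hkb' : α ^ 3 * γ ^ 3 = k := mul_right_cancel₀ hb' hB'
  have hαγ2 : α ^ 2 * γ ^ 2 ≠ 0 := mul_ne_zero (pow_ne_zero 2 hα) (pow_ne_zero 2 hγ)
  have hν' : ν = α * γ :=
    mul_right_cancel₀ hαγ2 (by linear_combination hkb - hkb')
  have hα3γ : α ^ 3 * γ ≠ 0 := mul_ne_zero (pow_ne_zero 3 hα) hγ
  have h5 : c * α ^ 2 = a * γ ^ 2 :=
    mul_right_cancel₀ hα3γ (by linear_combination hA - c * α ^ 4 * hν' - a * hkb')
  have h6 : c' * α ^ 2 = a' * γ ^ 2 :=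
    mul_right_cancel₀ hα3γ (by linear_combination hA' - a' * hkb')
  have h7 : a * c' = a' * c :=
    mul_right_cancel₀ (pow_ne_zero 2 hγ) (by linear_combination c * h6 - c' * h5)
  have hratio' : a * c' = -(a' * c) := by
    field_simp at hratio
    linear_combination hratio
  have h8 : a' * c = 0 := by linear_combination (-(1:ℂ)/2) * (h7 - hratio')
  rcases mul_eq_zero.mp h8 with h | h
  · exact ha' h
  · exact hc h
end
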